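/- For any natural number n ≥ 4 and any two vertices (a₁,a₂,a₃), (b₁,b₂,b₃) of the cubical staircase graph CS_n, the graph distance between them equals |a₁−b₁| + |a₂−b₂| + |a₃−b₃|. -/

import Mathlib

open SimpleGraph Finset

/-- The `k`-token graph of a graph `G`: vertices are `k`-element subsets of the vertex set,
two subsets adjacent iff their symmetric difference is `{x, y}` with `xy` an edge of `G`. -/
def tokenGraph {V : Type*} [DecidableEq V] (G : SimpleGraph V) (k : ℕ) :
    SimpleGraph {s : Finset V // s.card = k} where
  Adj A B := ∃ x y, G.Adj x y ∧ symmDiff A.1 B.1 = {x, y}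
  symm := by
    constructor
    rintro A B ⟨x, y, hxy, h⟩
    exact ⟨x, y, hxy, by rwa [symmDiff_comm]⟩
  loopless := by
    constructor
    rintro A ⟨x, y, hxy, h⟩
    rw [symmDiff_self] at h
    exact (Finset.insert_nonempty x {y}).ne_empty (by simpa using h.symm)

/-- Vertex set of the cubical staircase graph `CS n` (1-indexed coordinates). -/
abbrev CSVert (n : ℕ) :=
  {v : ℕ × ℕ × ℕ // 1 ≤ v.1 ∧ v.1 ≤ n - 2 ∧ 1 ≤ v.2.1 ∧ v.2.1 ≤ v.1 ∧
    1 ≤ v.2.2 ∧ v.2.2 ≤ n - 1 - v.1}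

/-- The cubical staircase graph `CS n`: two vertices are adjacent iff they differ in exactly
one coordinate, by exactly 1. -/
def CS (n : ℕ) : SimpleGraph (CSVert n) where
  Adj a b :=
    (a.1.1 = b.1.1 ∧ a.1.2.1 = b.1.2.1 ∧ (a.1.2.2 + 1 = b.1.2.2 ∨ b.1.2.2 + 1 = a.1.2.2)) ∨
    (a.1.1 = b.1.1 ∧ a.1.2.2 = b.1.2.2 ∧ (a.1.2.1 + 1 = b.1.2.1 ∨ b.1.2.1 + 1 = a.1.2.1)) ∨
    (a.1.2.1 = b.1.2.1 ∧ a.1.2.2 = b.1.2.2 ∧ (a.1.1 + 1 = b.1.1 ∨ b.1.1 + 1 = a.1.1))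
  symm := ⟨fun a b h => by omega⟩
  loopless := ⟨fun a h => by omega⟩

/-- Disjoint union of an arbitrary family of graphs. -/
def sigmaGraph {ι : Type*} {V : ι → Type*} (G : ∀ i, SimpleGraph (V i)) :
    SimpleGraph (Σ i, V i) where
  Adj a b := ∃ (i : ι) (x y : V i), (G i).Adj x y ∧ a = ⟨i, x⟩ ∧ b = ⟨i, y⟩
  symm := by constructor; rintro a b ⟨i, x, y, h, rfl, rfl⟩; exact ⟨i, y, x, h.symm, rfl, rfl⟩
  loopless := by
    constructor
    rintro a ⟨i, x, y, h, rfl, he⟩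
    exact h.ne (by simpa using he)

/-!
The ℓ¹ distance changes by at most one along an edge, so it bounds the graph distance from below.
Conversely the staircase is cut out by the constraints `1 ≤ j ≤ i`, `1 ≤ k`, `i + k ≤ n - 1`, and
moving toward the target coordinate by coordinate in a suitable order never violates them.
-/

namespace SimpleGraph

variable {V : Type*} (G : SimpleGraph V) (d : V → V → ℕ)

theorem le_length_of_adj_le_succ (hself : ∀ b, d b b = 0)
    (hadj : ∀ a a' b, G.Adj a a' → d a b ≤ d a' b + 1) {a b : V} (p : G.Walk a b) :
    d a b ≤ p.length := by
  induction p with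
  | nil => simp [hself]
  | cons h _ ih => simpa using (hadj _ _ _ h).trans (Nat.add_le_add_right ih 1)

theorem exists_walk_length_eq_of_exists_adj_pred (hself : ∀ b, d b b = 0)
    (hdesc : ∀ a b, a ≠ b → ∃ a', G.Adj a a' ∧ d a' b + 1 = d a b) (a b : V) :
    ∃ p : G.Walk a b, p.length = d a b := by
  induction hm : d a b using Nat.strong_induction_on generalizing a with
  | _ m ih =>
    by_cases hab : a = b
    · subst hab
      exact ⟨.nil, by simp [← hm, hself]⟩
    · obtain ⟨a', hadj, hd⟩ := hdesc a b hab
      obtain ⟨p, hp⟩ := ih (d a' b) (by omega) a' rfl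
      exact ⟨.cons hadj p, by simp [hp, ← hm, ← hd]⟩

theorem dist_eq_of_adj (hself : ∀ b, d b b = 0)
    (hadj : ∀ a a' b, G.Adj a a' → d a b ≤ d a' b + 1)
    (hdesc : ∀ a b, a ≠ b → ∃ a', G.Adj a a' ∧ d a' b + 1 = d a b) (a b : V) :
    G.dist a b = d a b := by
  obtain ⟨p, hp⟩ := exists_walk_length_eq_of_exists_adj_pred G d hself hdesc a b
  obtain ⟨q, hq⟩ := Reachable.exists_walk_length_eq_dist ⟨p⟩
  exact le_antisymm (hp ▸ dist_le p) (hq ▸ le_length_of_adj_le_succ G d hself hadj q)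

end SimpleGraph

def l1Dist (u v : ℕ × ℕ × ℕ) : ℕ :=
  ((u.1 : ℤ) - v.1).natAbs + ((u.2.1 : ℤ) - v.2.1).natAbs + ((u.2.2 : ℤ) - v.2.2).natAbs

namespace CS

theorem l1Dist_le_succ_of_adj {n : ℕ} {a a' : CSVert n} (h : (CS n).Adj a a') (b : CSVert n) :
    l1Dist a.1 b.1 ≤ l1Dist a'.1 b.1 + 1 := by
  simp only [CS] at h
  simp only [l1Dist]
  omega

/-- The order of the moves (down in `k`, down in `j`, along `i`, up in `j`, up in `k`) is what
keeps each step inside the staircase. -/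
theorem exists_adj_l1Dist_pred {n : ℕ} {a b : CSVert n} (hab : a ≠ b) :
    ∃ a', (CS n).Adj a a' ∧ l1Dist a'.1 b.1 + 1 = l1Dist a.1 b.1 := by
  obtain ⟨⟨i, j, k⟩, ha⟩ := a
  obtain ⟨⟨i', j', k'⟩, hb⟩ := b
  have hne : (i, j, k) ≠ (i', j', k') := fun h => hab (Subtype.ext h)
  simp only [ne_eq, Prod.mk.injEq] at ha hb hne
  simp only [CS, l1Dist]
  by_cases hk : k' < k
  · exact ⟨⟨(i, j, k - 1), by dsimp only; omega⟩, by dsimp only; omega⟩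
  by_cases hj : j' < j
  · exact ⟨⟨(i, j - 1, k), by dsimp only; omega⟩, by dsimp only; omega⟩
  by_cases hi : i < i'
  · exact ⟨⟨(i + 1, j, k), by dsimp only; omega⟩, by dsimp only; omega⟩
  by_cases hi' : i' < i
  · exact ⟨⟨(i - 1, j, k), by dsimp only; omega⟩, by dsimp only; omega⟩
  by_cases hj' : j < j'
  · exact ⟨⟨(i, j + 1, k), by dsimp only; omega⟩, by dsimp only; omega⟩
  · exact ⟨⟨(i, j, k + 1), by dsimp only; omega⟩, by dsimp only; omega⟩

end CS

theorem stmt3_general {n : ℕ} (a b : CSVert n) :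
    (CS n).dist a b =
      ((a.1.1 : ℤ) - b.1.1).natAbs + ((a.1.2.1 : ℤ) - b.1.2.1).natAbs +
        ((a.1.2.2 : ℤ) - b.1.2.2).natAbs :=
  (CS n).dist_eq_of_adj (fun a b => l1Dist a.1 b.1) (fun _ => by simp [l1Dist])
    (fun _ _ b h => CS.l1Dist_le_succ_of_adj h b) (fun _ _ hab => CS.exists_adj_l1Dist_pred hab)
    a b

theorem stmt3 {n : ℕ} (hn : 4 ≤ n) (a b : CSVert n) :
    (CS n).dist a b =
      ((a.1.1 : ℤ) - b.1.1).natAbs + ((a.1.2.1 : ℤ) - b.1.2.1).natAbs +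
        ((a.1.2.2 : ℤ) - b.1.2.2).natAbs :=
  stmt3_general a b
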